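/- For the metric g₁ = (x+y²) dx dy on the domain {x + y² > 0} ⊂ ℝ², the potential V = c₁/(x+y²) + c₂ y/(x+y²) + c₃ y(y²−3x)/(x+y²) + c₄ satisfies the Bertrand–Darboux compatibility with the Killing tensors arising from the projectively equivalent metrics g₂ = −2(x+y²)y^{−3} dx dy + (x+y²)² y^{−4} dy² and g₃: namely, the 1-form with components K_{ia} g₁^{ab} ∂_b V is closed, where K = (det g₁)^{2/3} (det g₂)^{−2/3} g₂ (indices of g₂ taken as a (0,2)-tensor), for all constants c₁,…,c₄. -/

import Mathlib

noncomputable def pX (f : ℝ → ℝ → ℝ) : ℝ → ℝ → ℝ := fun x y => deriv (fun t => f t y) x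
noncomputable def pY (f : ℝ → ℝ → ℝ) : ℝ → ℝ → ℝ := fun x y => deriv (fun t => f x t) y

/-- The potential of the generating system S₁ for the metric g₁ = (x+y²)dx dy. -/
noncomputable def Vpot (c1 c2 c3 c4 : ℝ) : ℝ → ℝ → ℝ := fun x y =>
  c1 / (x + y ^ 2) + c2 * y / (x + y ^ 2) + c3 * y * (y ^ 2 - 3 * x) / (x + y ^ 2) + c4

/-- det g₁ for g₁ = (x+y²) dx dy, i.e. matrix [[0,(x+y²)/2],[(x+y²)/2,0]]. -/
noncomputable def detg1 : ℝ → ℝ → ℝ := fun x y => -((x + y ^ 2) ^ 2 / 4)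

/-- det g₂ for g₂ = −2(x+y²)y⁻³ dx dy + (x+y²)²y⁻⁴ dy². -/
noncomputable def detg2 : ℝ → ℝ → ℝ := fun x y => -((x + y ^ 2) ^ 2 / y ^ 6)

/-- The weight factor (det g₁)^{2/3}(det g₂)^{-2/3} (with absolute values). -/
noncomputable def wfac : ℝ → ℝ → ℝ := fun x y => |detg1 x y / detg2 x y| ^ ((2 : ℝ) / 3)

/-- Components of the Killing tensor K = (det g₁)^{2/3}(det g₂)^{-2/3} g₂ of g₁
(as a (0,2)-tensor); g₂ has matrix [[0, −(x+y²)/y³],[−(x+y²)/y³, (x+y²)²/y⁴]]. -/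
noncomputable def Kt11 : ℝ → ℝ → ℝ := fun _ _ => 0
noncomputable def Kt12 : ℝ → ℝ → ℝ := fun x y => wfac x y * (-(x + y ^ 2) / y ^ 3)
noncomputable def Kt22 : ℝ → ℝ → ℝ := fun x y => wfac x y * ((x + y ^ 2) ^ 2 / y ^ 4)

/-- Components of g₁⁻¹ : [[0, 2/(x+y²)],[2/(x+y²), 0]]. -/
noncomputable def gi12 : ℝ → ℝ → ℝ := fun x y => 2 / (x + y ^ 2)

/-- Components of the 1-form ωᵢ = K_{ia} g₁^{ab} ∂_b V. -/
noncomputable def ω1 (c1 c2 c3 c4 : ℝ) : ℝ → ℝ → ℝ := fun x y =>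
  Kt11 x y * (gi12 x y * pY (Vpot c1 c2 c3 c4) x y)
    + Kt12 x y * (gi12 x y * pX (Vpot c1 c2 c3 c4) x y)
noncomputable def ω2 (c1 c2 c3 c4 : ℝ) : ℝ → ℝ → ℝ := fun x y =>
  Kt12 x y * (gi12 x y * pY (Vpot c1 c2 c3 c4) x y)
    + Kt22 x y * (gi12 x y * pX (Vpot c1 c2 c3 c4) x y)

/-! On the domain, `det g₁ / det g₂ = y⁶ / 4`, so the weight factor is the constant
`κ = (1/4)^(2/3)` times `y⁴` and `ω` is an explicit rational 1-form. Both `∂ₓω₂` and `∂ᵧω₁` then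
equal `2κ (c₁(x − 3y²) + 2c₂y(x − y²) + 16c₃xy³) / (x + y²)³`. -/

lemma HasDerivAt.div_sq {𝕜 : Type*} [NontriviallyNormedField 𝕜] {f q : 𝕜 → 𝕜} {f' q' x : 𝕜}
    (hf : HasDerivAt f f' x) (hq : HasDerivAt q q' x) (hqx : q x ≠ 0) :
    HasDerivAt (fun t => f t / q t ^ 2) ((f' * q x - 2 * f x * q') / q x ^ 3) x := by
  refine (hf.div (hq.fun_pow 2) (pow_ne_zero 2 hqx)).congr_deriv ?_
  field_simp
  ring

noncomputable def κ : ℝ := (1 / 4 : ℝ) ^ ((2 : ℝ) / 3)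

section

variable (c1 c2 c3 c4 : ℝ) {x y : ℝ}

lemma wfac_eq (hA : x + y ^ 2 ≠ 0) (hy : y ≠ 0) : wfac x y = κ * y ^ 4 := by
  have hratio : detg1 x y / detg2 x y = (y ^ 2) ^ (3 : ℕ) * (1 / 4) := by
    simp only [detg1, detg2]
    field_simp
  rw [wfac, hratio, abs_of_nonneg (by positivity), Real.mul_rpow (by positivity) (by norm_num),
    ← Real.rpow_natCast, ← Real.rpow_mul (sq_nonneg y), κ, mul_comm]
  norm_num [← pow_mul]

lemma hasDerivAt_Vpot_fst (hA : x + y ^ 2 ≠ 0) :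
    HasDerivAt (fun t => Vpot c1 c2 c3 c4 t y)
      (-(c1 + c2 * y + 4 * c3 * y ^ 3) / (x + y ^ 2) ^ 2) x := by
  have hV : (fun t => Vpot c1 c2 c3 c4 t y)
      = fun t => (c1 + c2 * y + c3 * y * (y ^ 2 - 3 * t)) / (t + y ^ 2) + c4 := by
    funext t
    simp only [Vpot]
    ring
  have hid := hasDerivAt_id' x
  have hnum := ((hid.const_mul 3).const_sub (y ^ 2)).const_mul (c3 * y) |>.const_add (c1 + c2 * y)
  rw [hV]
  refine ((hnum.div (hid.add_const (y ^ 2)) hA).add_const c4).congr_deriv ?_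
  field_simp
  ring

lemma hasDerivAt_Vpot_snd (hA : x + y ^ 2 ≠ 0) :
    HasDerivAt (fun s => Vpot c1 c2 c3 c4 x s)
      ((c2 * x - 3 * c3 * x ^ 2 - c2 * y ^ 2 + c3 * y ^ 4 - 2 * c1 * y + 6 * c3 * x * y ^ 2)
        / (x + y ^ 2) ^ 2) y := by
  have hV : (fun s => Vpot c1 c2 c3 c4 x s)
      = fun s => (c1 + c2 * s + c3 * (s ^ 3 - 3 * x * s)) / (x + s ^ 2) + c4 := by
    funext s
    simp only [Vpot]
    ring
  have hid := hasDerivAt_id' y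
  have hnum := ((hid.const_mul c2).const_add c1).fun_add
    (((hasDerivAt_pow 3 y).fun_sub (hid.const_mul (3 * x))).const_mul c3)
  rw [hV]
  refine ((hnum.div ((hasDerivAt_pow 2 y).const_add x) hA).add_const c4).congr_deriv ?_
  field_simp
  ring

lemma ω1_eq (hA : x + y ^ 2 ≠ 0) (hy : y ≠ 0) :
    ω1 c1 c2 c3 c4 x y = 2 * κ * y * (c1 + c2 * y + 4 * c3 * y ^ 3) / (x + y ^ 2) ^ 2 := by
  simp only [ω1, Kt11, Kt12, gi12, pX, wfac_eq hA hy, (hasDerivAt_Vpot_fst c1 c2 c3 c4 hA).deriv]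
  field_simp
  ring

lemma ω2_eq (hA : x + y ^ 2 ≠ 0) (hy : y ≠ 0) :
    ω2 c1 c2 c3 c4 x y = 2 * κ * (c1 * (y ^ 2 - x) - 2 * c2 * y * x
      + c3 * y * (3 * x ^ 2 - 10 * y ^ 2 * x - 5 * y ^ 4)) / (x + y ^ 2) ^ 2 := by
  simp only [ω2, Kt12, Kt22, gi12, pX, pY, wfac_eq hA hy,
    (hasDerivAt_Vpot_fst c1 c2 c3 c4 hA).deriv, (hasDerivAt_Vpot_snd c1 c2 c3 c4 hA).deriv]
  field_simp
  ring

lemma hasDerivAt_ω2_fst (hA : x + y ^ 2 ≠ 0) (hy : y ≠ 0) :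
    HasDerivAt (fun t => ω2 c1 c2 c3 c4 t y)
      (2 * κ * (c1 * (x - 3 * y ^ 2) + 2 * c2 * y * (x - y ^ 2) + 16 * c3 * x * y ^ 3)
        / (x + y ^ 2) ^ 3) x := by
  have hω2 : (fun t => ω2 c1 c2 c3 c4 t y) =ᶠ[nhds x] fun t => 2 * κ * (c1 * (y ^ 2 - t)
      - 2 * c2 * y * t + c3 * y * (3 * t ^ 2 - 10 * y ^ 2 * t - 5 * y ^ 4)) / (t + y ^ 2) ^ 2 := by
    filter_upwards [(continuous_add_const (y ^ 2)).continuousAt.eventually_ne hA] with t ht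
    exact ω2_eq c1 c2 c3 c4 ht hy
  have hid := hasDerivAt_id' x
  have hnum := (((hid.const_sub (y ^ 2)).const_mul c1).fun_sub (hid.const_mul (2 * c2 * y))
    |>.fun_add ((((hasDerivAt_pow 2 x).const_mul 3).fun_sub (hid.const_mul (10 * y ^ 2))).sub_const
      (5 * y ^ 4) |>.const_mul (c3 * y))).const_mul (2 * κ)
  refine ((hnum.div_sq (hid.add_const (y ^ 2)) hA).congr_of_eventuallyEq hω2).congr_deriv ?_
  field_simp
  ring

lemma hasDerivAt_ω1_snd (hA : x + y ^ 2 ≠ 0) (hy : y ≠ 0) :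
    HasDerivAt (fun s => ω1 c1 c2 c3 c4 x s)
      (2 * κ * (c1 * (x - 3 * y ^ 2) + 2 * c2 * y * (x - y ^ 2) + 16 * c3 * x * y ^ 3)
        / (x + y ^ 2) ^ 3) y := by
  have hω1 : (fun s => ω1 c1 c2 c3 c4 x s) =ᶠ[nhds y]
      fun s => 2 * κ * s * (c1 + c2 * s + 4 * c3 * s ^ 3) / (x + s ^ 2) ^ 2 := by
    filter_upwards [(by fun_prop : Continuous fun s : ℝ => x + s ^ 2).continuousAt.eventually_ne hA,
      eventually_ne_nhds hy] with s hs hs'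
    exact ω1_eq c1 c2 c3 c4 hs hs'
  have hid := hasDerivAt_id' y
  have hnum := (hid.const_mul (2 * κ)).fun_mul
    (((hid.const_mul c2).const_add c1).fun_add ((hasDerivAt_pow 3 y).const_mul (4 * c3)))
  refine ((hnum.div_sq ((hasDerivAt_pow 2 y).const_add x) hA).congr_of_eventuallyEq
    hω1).congr_deriv ?_
  field_simp
  ring

end

/-- for the metric g₁ = (x+y²) dx dy on {x+y² > 0, y ≠ 0}, the
potential V = c₁/(x+y²) + c₂y/(x+y²) + c₃y(y²−3x)/(x+y²) + c₄ satisfies the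
Bertrand–Darboux equation (closedness of ωᵢ = K_{ia} g₁^{ab}∂_bV) for the
Killing tensor K = (det g₁)^{2/3}(det g₂)^{-2/3} g₂ arising from the
projectively equivalent metric g₂, for all constants c₁,…,c₄. -/
theorem stmt_11 :
    ∀ (c1 c2 c3 c4 : ℝ) (x y : ℝ), 0 < x + y ^ 2 → y ≠ 0 →
      pX (ω2 c1 c2 c3 c4) x y = pY (ω1 c1 c2 c3 c4) x y := by
  intro c1 c2 c3 c4 x y hA hy
  rw [pX, pY, (hasDerivAt_ω2_fst c1 c2 c3 c4 hA.ne' hy).deriv,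
    (hasDerivAt_ω1_snd c1 c2 c3 c4 hA.ne' hy).deriv]
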